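/- For any edge e = {u,v} of the base graph G, if two trap-colourings of the dotted triple-graph DT(G) agree on the added set A_e, then they agree on the two neighbouring primary sets P_u and P_v; that is, the colouring of an added set fully determines the colours of the vertices in the two adjacent primary sets. -/

import Mathlib

open SimpleGraph

inductive Colour : Type
  | white | black | green | red
  deriving DecidableEq

variable {V : Type*}

/-- The triple graph `T(G)`: vertex set `V × Fin 3`, with all nine edges between
`P_u = {u} × Fin 3` and `P_v = {v} × Fin 3` for each edge `{u,v}` of `G`. -/
def tripleGraph (G : SimpleGraph V) : SimpleGraph (V × Fin 3) where
  Adj p q := G.Adj p.1 q.1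
  symm := ⟨fun _ _ h => G.adj_symm h⟩
  loopless := ⟨fun p h => G.irrefl h⟩

instance (G : SimpleGraph V) [DecidableRel G.Adj] : DecidableRel (tripleGraph G).Adj :=
  fun p q => inferInstanceAs (Decidable (G.Adj p.1 q.1))

/-- The dotting operator `D`: subdivide every edge of `H`. Vertices are
`W ⊕ H.edgeSet`: primary vertices are `Sum.inl`, added vertices are `Sum.inr`. -/
def dotted {W : Type*} (H : SimpleGraph W) : SimpleGraph (W ⊕ H.edgeSet) where
  Adj x y :=
    (∃ (w : W) (e : H.edgeSet), x = Sum.inl w ∧ y = Sum.inr e ∧ w ∈ (e : Sym2 W)) ∨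
    (∃ (w : W) (e : H.edgeSet), x = Sum.inr e ∧ y = Sum.inl w ∧ w ∈ (e : Sym2 W))
  symm := by
    constructor
    rintro x y (⟨w, e, rfl, rfl, h⟩ | ⟨w, e, rfl, rfl, h⟩)
    · exact Or.inr ⟨w, e, rfl, rfl, h⟩
    · exact Or.inl ⟨w, e, rfl, rfl, h⟩
  loopless := by
    constructor
    rintro x (⟨w, e, h₁, h₂, -⟩ | ⟨w, e, h₁, h₂, -⟩) <;> subst h₁ <;> simp at h₂

/-- The dotted triple-graph `DT(G) = D(T(G))`. -/
abbrev dottedTripleGraph (G : SimpleGraph V) :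
    SimpleGraph ((V × Fin 3) ⊕ (tripleGraph G).edgeSet) :=
  dotted (tripleGraph G)

/-- A trap-colouring of `DT(G)`. -/
structure TrapColouring (G : SimpleGraph V) where
  colour : (V × Fin 3) ⊕ (tripleGraph G).edgeSet → Colour
  primary_not_red : ∀ p : V × Fin 3, colour (Sum.inl p) ≠ Colour.red
  primary_inj : ∀ v : V, Function.Injective fun i : Fin 3 => colour (Sum.inl (v, i))
  added_rule : ∀ (p q : V × Fin 3) (h : (tripleGraph G).Adj p q),
    colour (Sum.inr ⟨s(p, q), (SimpleGraph.mem_edgeSet _).mpr h⟩) =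
      if colour (Sum.inl p) = colour (Sum.inl q) then colour (Sum.inl p) else Colour.red



instance : Fintype Colour where
  elems := {Colour.white, Colour.black, Colour.green, Colour.red}
  complete := by intro c; cases c <;> simp

lemma colour_surj (f : Fin 3 → Colour) (hinj : Function.Injective f)
    (hred : ∀ i, f i ≠ Colour.red) (c : Colour) (hc : c ≠ Colour.red) :
    ∃ i, f i = c := by
  revert hinj hred hc
  revert f c
  decide

lemma trap_one_side (G : SimpleGraph V) (tc₁ tc₂ : TrapColouring G) (u v : V)
    (huv : G.Adj u v)
    (hagree : ∀ i j : Fin 3,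
      tc₁.colour (Sum.inr ⟨s(((u,i) : V × Fin 3),(v,j)),
        (SimpleGraph.mem_edgeSet _).mpr (show (tripleGraph G).Adj (u,i) (v,j) from huv)⟩) =
      tc₂.colour (Sum.inr ⟨s(((u,i) : V × Fin 3),(v,j)),
        (SimpleGraph.mem_edgeSet _).mpr (show (tripleGraph G).Adj (u,i) (v,j) from huv)⟩))
    (i : Fin 3) : tc₁.colour (Sum.inl (u, i)) = tc₂.colour (Sum.inl (u, i)) := by
  set c := tc₁.colour (Sum.inl (u, i)) with hc
  have hcred : c ≠ Colour.red := tc₁.primary_not_red _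
  obtain ⟨j, hj⟩ := colour_surj (fun j => tc₁.colour (Sum.inl (v, j)))
    (tc₁.primary_inj v) (fun j => tc₁.primary_not_red _) c hcred
  have hadj : (tripleGraph G).Adj (u,i) (v,j) := huv
  have h1 := tc₁.added_rule (u,i) (v,j) hadj
  have h2 := tc₂.added_rule (u,i) (v,j) hadj
  rw [← hc, hj, if_pos rfl] at h1
  rw [hagree i j, h2] at h1
  split at h1
  · exact h1.symm
  · exact absurd h1.symm hcred

/-- for any edge `e = {u,v}` of the base graph, if two trap-colourings of
`DT(G)` agree on the added set `A_e`, then they agree on the two neighbouring primary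
sets `P_u` and `P_v`. -/
theorem trapColouring_added_determines_primary (G : SimpleGraph V)
    (tc₁ tc₂ : TrapColouring G) (u v : V) (huv : G.Adj u v)
    (hagree : ∀ a : (tripleGraph G).edgeSet,
      Sym2.map Prod.fst (a : Sym2 (V × Fin 3)) = s(u, v) →
      tc₁.colour (Sum.inr a) = tc₂.colour (Sum.inr a)) :
    (∀ i : Fin 3, tc₁.colour (Sum.inl (u, i)) = tc₂.colour (Sum.inl (u, i))) ∧
    (∀ i : Fin 3, tc₁.colour (Sum.inl (v, i)) = tc₂.colour (Sum.inl (v, i))) := by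
  constructor
  · intro i
    apply trap_one_side G tc₁ tc₂ u v huv
    intro i j
    exact hagree _ (by simp)
  · intro i
    apply trap_one_side G tc₁ tc₂ v u huv.symm
    intro i j
    exact hagree _ (by simp [Sym2.eq_swap])
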